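/- Let L be a finitely generated free ℤ-module equipped with a symmetric bilinear form ⟨·,·⟩ such that L ⊗ ℝ contains no 2-dimensional totally isotropic subspace. Let (α_j)_{j∈ℕ} be a sequence of nonzero elements of L with ⟨α_i, α_j⟩ = 0 for all i ≠ j. Then there exists β ∈ L with ⟨β, β⟩ = 0 such that all but finitely many of the α_j lie in the ℚ-span of β (in L ⊗ ℚ). -/

import Mathlib

open TensorProduct

/-!
A pairwise orthogonal family in a Noetherian module has only finitely many non-isotropic
members: a finite subfamily spans everything, and any member outside it is orthogonal to that span.
Fix an isotropic member `β ≠ 0`. Any other isotropic member not proportional to `β` spans with it a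
totally isotropic plane, and linear independence survives the flat base change `ℤ → ℝ`.
-/

theorem Submodule.exists_finset_range_subset_span {R M ι : Type*} [Semiring R] [AddCommMonoid M]
    [Module R M] [IsNoetherian R M] (v : ι → M) :
    ∃ s : Finset ι, Set.range v ⊆ span R (v '' s) := by
  have hcompact := (fg_iff_compact _).mp (IsNoetherian.noetherian (span R (Set.range v)))
  obtain ⟨s, hs⟩ := CompleteLattice.IsCompactElement.exists_finset_of_le_iSup _ hcompact
    (fun i => span R {v i}) span_range_eq_iSup.le
  refine ⟨s, subset_span.trans (hs.trans ?_)⟩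
  exact iSup₂_le fun i hi => span_mono (Set.singleton_subset_iff.mpr (Set.mem_image_of_mem v hi))

theorem LinearMap.BilinForm.finite_setOf_apply_self_ne_zero_of_pairwise {R M ι : Type*}
    [CommSemiring R] [AddCommMonoid M] [Module R M] [IsNoetherian R M]
    (B : LinearMap.BilinForm R M) {v : ι → M} (hv : Pairwise fun i j => B (v i) (v j) = 0) :
    {j | B (v j) (v j) ≠ 0}.Finite := by
  obtain ⟨s, hs⟩ := Submodule.exists_finset_range_subset_span (R := R) v
  refine s.finite_toSet.subset fun j hj => ?_
  by_contra hjs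
  have hspan : Submodule.span R (v '' s) ≤ LinearMap.ker (B (v j)) := by
    rw [Submodule.span_le]
    rintro _ ⟨i, hi, rfl⟩
    exact hv fun hji => hjs (hji ▸ hi)
  exact hj (hspan (hs ⟨j, rfl⟩))

theorem LinearIndependent.pair_of_not_exists_smul_eq {R M : Type*} [CommRing R] [IsDomain R]
    [AddCommGroup M] [Module R M] [Module.IsTorsionFree R M] {x y : M} (hy : y ≠ 0)
    (h : ¬ ∃ m n : R, n ≠ 0 ∧ n • x = m • y) :
    LinearIndependent R ![x, y] := by
  rw [LinearIndependent.pair_iff]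
  intro a b hab
  have ha : a = 0 := by
    by_contra ha
    exact h ⟨-b, a, ha, by rw [neg_smul, eq_neg_iff_add_eq_zero, hab]⟩
  subst ha
  rw [zero_smul, zero_add, smul_eq_zero] at hab
  exact ⟨rfl, hab.resolve_right hy⟩

theorem LinearMap.apply_eq_zero_of_mem_span {R M N P : Type*} [CommSemiring R]
    [AddCommMonoid M] [AddCommMonoid N] [AddCommMonoid P] [Module R M] [Module R N] [Module R P]
    (f : M →ₗ[R] N →ₗ[R] P) {s : Set M} {t : Set N} (h : ∀ x ∈ s, ∀ y ∈ t, f x y = 0)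
    {x : M} (hx : x ∈ Submodule.span R s) {y : N} (hy : y ∈ Submodule.span R t) : f x y = 0 := by
  have hs : s ⊆ LinearMap.ker (f.flip y) := fun x' hx' =>
    (Submodule.span_le.mpr (h x' hx') : Submodule.span R t ≤ LinearMap.ker (f x')) hy
  exact Submodule.span_le.mpr hs hx

theorem LinearMap.BilinForm.baseChange_eq_zero_of_mem_span {R A M ι : Type*} [CommSemiring R]
    [CommSemiring A] [Algebra R A] [AddCommMonoid M] [Module R M] (B : LinearMap.BilinForm R M)
    {v : ι → M} (hv : ∀ i j, B (v i) (v j) = 0) {x y : A ⊗[R] M}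
    (hx : x ∈ Submodule.span A (Set.range fun i => (1 : A) ⊗ₜ[R] v i))
    (hy : y ∈ Submodule.span A (Set.range fun i => (1 : A) ⊗ₜ[R] v i)) :
    B.baseChange A x y = 0 := by
  refine LinearMap.apply_eq_zero_of_mem_span _ ?_ hx hy
  rintro _ ⟨i, rfl⟩ _ ⟨j, rfl⟩
  simp [hv i j]

theorem pairwise_orthogonal_eventually_proportional_general
    {L : Type*} [AddCommGroup L] [Module ℤ L] [Module.Free ℤ L] [Module.Finite ℤ L]
    (B : LinearMap.BilinForm ℤ L)
    (hiso : ¬ ∃ W : Submodule ℝ (ℝ ⊗[ℤ] L), Module.finrank ℝ W = 2 ∧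
      ∀ v ∈ W, ∀ w ∈ W, B.baseChange ℝ v w = 0)
    (α : ℕ → L) (hα : ∀ j, α j ≠ 0)
    (horth : ∀ i j, i ≠ j → B (α i) (α j) = 0) :
    ∃ β : L, B β β = 0 ∧
      {j : ℕ | ¬ ∃ m n : ℤ, n ≠ 0 ∧ n • α j = m • β}.Finite := by
  -- `n • α j` is `zsmul`, which agrees with the given `ℤ`-action only propositionally.
  obtain rfl : ‹Module ℤ L› = AddCommGroup.toIntModule L := Subsingleton.elim _ _
  have hfin := B.finite_setOf_apply_self_ne_zero_of_pairwise (v := α) fun i j => horth i j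
  obtain ⟨j₀, hj₀⟩ := hfin.infinite_compl.nonempty
  refine ⟨α j₀, not_not.mp hj₀, hfin.subset fun j hj => ?_⟩
  by_contra hjj
  have hne : j ≠ j₀ := by
    rintro rfl
    exact hj ⟨1, 1, one_ne_zero, rfl⟩
  have hpair : ∀ a b : Fin 2, B (![α j, α j₀] a) (![α j, α j₀] b) = 0 := by
    simp only [Fin.forall_fin_two, Matrix.cons_val_zero, Matrix.cons_val_one]
    exact ⟨⟨not_not.mp hjj, horth j j₀ hne⟩, horth j₀ j hne.symm, not_not.mp hj₀⟩
  have hind := Module.Flat.linearIndependent_one_tmul (S := ℝ)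
    (LinearIndependent.pair_of_not_exists_smul_eq (hα j₀) hj)
  exact hiso ⟨_, by simpa using finrank_span_eq_card hind,
    fun v hv w hw => B.baseChange_eq_zero_of_mem_span hpair hv hw⟩

/-- Let `L` be a finitely generated free `ℤ`-module with a symmetric bilinear form
such that `L ⊗ ℝ` contains no 2-dimensional totally isotropic subspace. If
`(α_j)_{j ∈ ℕ}` is a sequence of nonzero elements of `L` that are pairwise orthogonal,
then there is an isotropic `β ∈ L` such that all but finitely many `α_j` lie in the
`ℚ`-span of `β`. -/
theorem pairwise_orthogonal_eventually_proportional
    {L : Type*} [AddCommGroup L] [Module ℤ L] [Module.Free ℤ L] [Module.Finite ℤ L]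
    (B : LinearMap.BilinForm ℤ L) (hsymm : ∀ u v : L, B u v = B v u)
    (hiso : ¬ ∃ W : Submodule ℝ (ℝ ⊗[ℤ] L), Module.finrank ℝ W = 2 ∧
      ∀ v ∈ W, ∀ w ∈ W, B.baseChange ℝ v w = 0)
    (α : ℕ → L) (hα : ∀ j, α j ≠ 0)
    (horth : ∀ i j, i ≠ j → B (α i) (α j) = 0) :
    ∃ β : L, B β β = 0 ∧
      {j : ℕ | ¬ ∃ m n : ℤ, n ≠ 0 ∧ n • α j = m • β}.Finite :=
  pairwise_orthogonal_eventually_proportional_general B hiso α hα horth
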